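/- Let C be an isomorphism-closed class of topological spaces each of which is indiscrete, and suppose C is algebraic, i.e. the full subcategory C of topological spaces has coequalizers, its underlying-set functor U : C → Set has a left adjoint, and U preserves and reflects regular epimorphisms. Then C is the class of all one-point topological spaces, or the class of all topological spaces with at most one point, or the class of all indiscrete topological spaces. -/

import Mathlib

universe u

open Topology CategoryTheory CategoryTheory.Limits

/-- A class of topological spaces (in a fixed universe `u`). -/
abbrev TopClass := ∀ X : Type u, TopologicalSpace X → Prop

/-- `C` is closed under homeomorphisms. -/
def TopClass.IsoClosed (C : TopClass.{u}) : Prop :=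
  ∀ (X Y : Type u) (tX : TopologicalSpace X) (tY : TopologicalSpace Y),
    C X tX → Nonempty (@Homeomorph X Y tX tY) → C Y tY

/-- A topological space is indiscrete if its only open sets are `∅` and the whole space. -/
def IsIndiscreteTop (X : Type u) (tX : TopologicalSpace X) : Prop :=
  ∀ s : Set X, @IsOpen X tX s → s = ∅ ∨ s = Set.univ

/-- The full subcategory of `TopCat` determined by a class of topological spaces. -/
abbrev TopClass.Cat (C : TopClass.{u}) : Type (u + 1) :=
  ObjectProperty.FullSubcategory (fun X : TopCat.{u} => C X X.str)

/-- The underlying-set functor of the full subcategory determined by `C`. -/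
noncomputable def TopClass.U (C : TopClass.{u}) : C.Cat ⥤ Type u :=
  ObjectProperty.ι (P := _) ⋙ forget TopCat

/-- A concrete category (over `Type u`) is algebraic if it has coequalizers, its
underlying-set functor has a left adjoint and preserves and reflects regular
epimorphisms. -/
def AlgebraicConcreteCategory {D : Type (u + 1)} [Category.{u} D] (U : D ⥤ Type u) : Prop :=
  HasCoequalizers D ∧ U.IsRightAdjoint ∧
    (∀ (A B : D) (f : A ⟶ B), Nonempty (RegularEpi f) → Nonempty (RegularEpi (U.map f))) ∧
    (∀ (A B : D) (f : A ⟶ B), Nonempty (RegularEpi (U.map f)) → Nonempty (RegularEpi f))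

/-!
Every member of `C` is indiscrete, so every function between members is continuous: `U` is fully
faithful and `C` is, through `U`, a reflective subcategory of `Type` (with reflector `F`, the
left adjoint of `U`) closed under bijections.
If some member `W` has two points, the unit `X → U (F X)` is injective (functions `X → U W`
separate points), hence split when `X` is nonempty, so `X` lies in the subcategory; and `U (F ∅)`
is empty, since there is only one map `F ∅ ⟶ W` but two constant ones out of a nonempty set.
Otherwise every member is a subsingleton, `U (F PUnit)` is a one-point member, and the existence
of an empty member decides between the first two alternatives.
-/

namespace CategoryTheory

variable {D : Type*} [Category.{u} D] {G : D ⥤ Type u}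

lemma Adjunction.unit_app_injective_of_nontrivial {F : Type u ⥤ D} (adj : F ⊣ G) (W : D)
    [Nontrivial (G.obj W)] (X : Type u) :
    Function.Injective (adj.unit.app X) := by
  classical
  intro x y hxy
  by_contra hne
  obtain ⟨a, b, hab⟩ := exists_pair_ne (G.obj W)
  let g : X ⟶ G.obj W := TypeCat.ofHom fun z => if z = x then a else b
  have hg : adj.unit.app X ≫ G.map ((adj.homEquiv X W).symm g) = g :=
    (adj.homEquiv_unit X W _).symm.trans (Equiv.apply_symm_apply _ _)
  have hgxy : g x = g y := by
    rw [← hg, types_comp_apply, types_comp_apply, hxy]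
  simp only [g, TypeCat.hom_ofHom, TypeCat.Fun.coe_mk, ↓reduceIte, Ne.symm hne] at hgxy
  exact hab hgxy

lemma mem_essImage_of_unit_injective [Reflective G] {X : Type u} [Nonempty X]
    (h : Function.Injective ((reflectorAdjunction G).unit.app X)) : G.essImage X := by
  obtain ⟨r, hr⟩ := Function.Injective.hasLeftInverse (α := X) h
  have : IsSplitMono ((reflectorAdjunction G).unit.app X) :=
    IsSplitMono.mk' ⟨TypeCat.ofHom r, by ext x; exact hr x⟩
  exact mem_essImage_of_unit_isSplitMono

lemma Reflective.punit_mem_essImage [Reflective G] : G.essImage PUnit :=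
  mem_essImage_of_unit_injective (G := G) (Function.injective_of_subsingleton (α := PUnit) _)

lemma Reflective.isEmpty_obj_reflector_obj_pempty [Reflective G] (W : D)
    [Nontrivial (G.obj W)] : IsEmpty (G.obj ((reflector G).obj PEmpty)) := by
  refine ⟨fun i => ?_⟩
  obtain ⟨a, b, hab⟩ := exists_pair_ne (G.obj W)
  have : Subsingleton ((reflector G).obj PEmpty ⟶ W) :=
    ((reflectorAdjunction G).homEquiv _ _).subsingleton_congr.2
      ⟨fun f g => by ext x; exact x.elim⟩
  have hconst := congrArg (fun f => G.map f i) (Subsingleton.elim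
    (G.preimage (TypeCat.ofHom fun _ => a)) (G.preimage (TypeCat.ofHom fun _ => b)))
  simp only [Functor.map_preimage] at hconst
  exact hab hconst

lemma Reflective.mem_essImage_of_nontrivial [Reflective G] (W : D) [Nontrivial (G.obj W)]
    (X : Type u) : G.essImage X := by
  rcases isEmpty_or_nonempty X with hX | hX
  · have := isEmpty_obj_reflector_obj_pempty (G := G) W
    exact ⟨_, ⟨(Equiv.equivOfIsEmpty (G.obj ((reflector G).obj PEmpty)) X).toIso⟩⟩
  · exact mem_essImage_of_unit_injective
      ((reflectorAdjunction G).unit_app_injective_of_nontrivial W X)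

end CategoryTheory

lemma IsIndiscreteTop.continuous {X Y : Type u} {tX : TopologicalSpace X}
    {tY : TopologicalSpace Y} (hY : IsIndiscreteTop Y tY) (f : X → Y) :
    @Continuous X Y tX tY f := by
  rw [continuous_def]
  intro s hs
  rcases hY s hs with rfl | rfl <;> simp

lemma IsIndiscreteTop.of_subsingleton {X : Type u} (tX : TopologicalSpace X) [Subsingleton X] :
    IsIndiscreteTop X tX :=
  fun s _ => s.eq_empty_or_nonempty.imp_right fun ⟨x, hx⟩ => Set.eq_univ_of_forall fun y => by
    rwa [Subsingleton.elim y x]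

namespace TopClass

variable {C : TopClass.{u}}

lemma mem_of_equiv (hiso : C.IsoClosed)
    (hind : ∀ (X : Type u) (tX : TopologicalSpace X), C X tX → IsIndiscreteTop X tX)
    {X Y : Type u} {tX : TopologicalSpace X} {tY : TopologicalSpace Y}
    (h : C X tX) (hY : IsIndiscreteTop Y tY) (e : X ≃ Y) : C Y tY :=
  hiso X Y tX tY h
    ⟨@Homeomorph.mk X Y tX tY e (hY.continuous e) ((hind X tX h).continuous e.symm)⟩

lemma mem_of_mem_essImage (hiso : C.IsoClosed)
    (hind : ∀ (X : Type u) (tX : TopologicalSpace X), C X tX → IsIndiscreteTop X tX)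
    {X : Type u} {tX : TopologicalSpace X} (h : C.U.essImage X) (hX : IsIndiscreteTop X tX) :
    C X tX :=
  mem_of_equiv hiso hind h.witness.property hX h.getIso.toEquiv

lemma U_full (hind : ∀ (X : Type u) (tX : TopologicalSpace X), C X tX → IsIndiscreteTop X tX) :
    C.U.Full where
  map_surjective {_ B} f := ⟨InducedCategory.homMk (TopCat.ofHom
    ⟨f, (hind _ _ B.property).continuous f⟩), rfl⟩

noncomputable abbrev reflectiveU
    (hind : ∀ (X : Type u) (tX : TopologicalSpace X), C X tX → IsIndiscreteTop X tX)
    [C.U.IsRightAdjoint] : Reflective C.U where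
  toFull := U_full hind
  toFaithful := Functor.Faithful.comp _ _
  L := C.U.leftAdjoint
  adj := Adjunction.ofIsRightAdjoint C.U

variable [C.U.IsRightAdjoint]

lemma mem_of_nonempty_of_subsingleton (hiso : C.IsoClosed)
    (hind : ∀ (X : Type u) (tX : TopologicalSpace X), C X tX → IsIndiscreteTop X tX)
    {X : Type u} (tX : TopologicalSpace X) [Nonempty X] [Subsingleton X] : C X tX :=
  letI := reflectiveU hind
  mem_of_mem_essImage hiso hind
    (Reflective.punit_mem_essImage.ofIso (equivOfSubsingletonOfSubsingleton
      (fun _ => Classical.arbitrary X) (fun _ => PUnit.unit)).toIso)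
    (IsIndiscreteTop.of_subsingleton tX)

lemma mem_of_nontrivial_mem (hiso : C.IsoClosed)
    (hind : ∀ (X : Type u) (tX : TopologicalSpace X), C X tX → IsIndiscreteTop X tX)
    {W : Type u} {tW : TopologicalSpace W} (hW : C W tW) [Nontrivial W]
    {X : Type u} {tX : TopologicalSpace X} (hX : IsIndiscreteTop X tX) : C X tX :=
  letI := reflectiveU hind
  let W' : C.Cat := ⟨@TopCat.of W tW, hW⟩
  haveI : Nontrivial (C.U.obj W') := ‹Nontrivial W›
  mem_of_mem_essImage hiso hind (Reflective.mem_essImage_of_nontrivial W' X) hX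

end TopClass

theorem algebraic_class_of_indiscrete_Top
    (C : TopClass.{u}) (hiso : C.IsoClosed)
    (hind : ∀ (X : Type u) (tX : TopologicalSpace X), C X tX → IsIndiscreteTop X tX)
    (halg : AlgebraicConcreteCategory C.U) :
    (∀ (X : Type u) (tX : TopologicalSpace X), C X tX ↔ (Nonempty X ∧ Subsingleton X)) ∨
    (∀ (X : Type u) (tX : TopologicalSpace X), C X tX ↔ Subsingleton X) ∨
    (∀ (X : Type u) (tX : TopologicalSpace X), C X tX ↔ IsIndiscreteTop X tX) := by
  have := halg.2.1
  by_cases hbig : ∃ (W : Type u) (tW : TopologicalSpace W), C W tW ∧ Nontrivial W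
  · obtain ⟨W, tW, hW, _⟩ := hbig
    exact .inr <| .inr fun X tX => ⟨hind X tX, C.mem_of_nontrivial_mem hiso hind hW⟩
  have hss : ∀ X tX, C X tX → Subsingleton X := fun X tX h =>
    not_nontrivial_iff_subsingleton.1 fun _ => hbig ⟨X, tX, h, ‹_›⟩
  by_cases hempty : ∃ (E : Type u) (tE : TopologicalSpace E), C E tE ∧ IsEmpty E
  · obtain ⟨E, tE, hE, _⟩ := hempty
    refine .inr <| .inl fun X tX => ⟨hss X tX, fun _ => ?_⟩
    rcases isEmpty_or_nonempty X with _ | _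
    · exact C.mem_of_equiv hiso hind hE (IsIndiscreteTop.of_subsingleton tX)
        (Equiv.equivOfIsEmpty E X)
    · exact C.mem_of_nonempty_of_subsingleton hiso hind tX
  · refine .inl fun X tX => ⟨fun h => ⟨?_, hss X tX h⟩, fun ⟨_, _⟩ =>
      C.mem_of_nonempty_of_subsingleton hiso hind tX⟩
    exact not_isEmpty_iff.1 fun _ => hempty ⟨X, tX, h, ‹_›⟩
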